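/- Let K ⊆ ℝ^n be a nonempty closed convex set, and let f be a polynomial of degree d ≥ 1 with Sol(K,f) nonempty. If the optimal value function φ(g) = inf{g(x) : x ∈ K} is finite-valued and locally Lipschitz continuous at f (there exist ε > 0 and L > 0 with |φ(g) − φ(f)| ≤ L‖g − f‖ for all g ∈ P_d with ‖g − f‖ < ε), then OP(K,f) is regular, i.e., Sol(K∞, f_d) is bounded. -/

import Mathlib

open Filter Topology MvPolynomial Bornology
open scoped RealInnerProductSpace Pointwise

noncomputable section

/-- `ℝ^n` as Euclidean space. -/
abbrev En (n : ℕ) := EuclideanSpace ℝ (Fin n)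

/-- Evaluation of a multivariate polynomial at a point of `ℝ^n`. -/
def evalP {n : ℕ} (f : MvPolynomial (Fin n) ℝ) (x : En n) : ℝ :=
  MvPolynomial.eval (fun i => x i) f

/-- `Sol(C,g)`: the set of global minimizers of `g` on `C`. -/
def solSet {n : ℕ} (C : Set (En n)) (g : En n → ℝ) : Set (En n) :=
  {x ∈ C | ∀ y ∈ C, g x ≤ g y}

/-- `K∞`: the asymptotic cone of `K`. -/
def asympCone {n : ℕ} (K : Set (En n)) : Set (En n) :=
  {v | ∃ (t : ℕ → ℝ) (x : ℕ → En n), (∀ k, x k ∈ K) ∧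
    Tendsto t atTop atTop ∧ Tendsto (fun k => (t k)⁻¹ • x k) atTop (𝓝 v)}

/-- The gradient `∇f` of a polynomial, via its partial derivatives. -/
def polyGrad {n : ℕ} (f : MvPolynomial (Fin n) ℝ) (x : En n) : En n :=
  WithLp.toLp 2 (fun i => MvPolynomial.eval (fun j => x j) (MvPolynomial.pderiv i f))

/-- The `ℓ2`-norm of the coefficient vector of a polynomial. -/
def l2Norm {n : ℕ} (p : MvPolynomial (Fin n) ℝ) : ℝ :=
  Real.sqrt (∑ m ∈ p.support, (MvPolynomial.coeff m p) ^ 2)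

/-- `S` is generic (residual) in `X`: it contains a countable intersection of sets, each of
which is open and dense in `X` (with respect to the `ℓ2` coefficient metric). -/
def IsGenericIn {n : ℕ} (X S : Set (MvPolynomial (Fin n) ℝ)) : Prop :=
  ∃ D : ℕ → Set (MvPolynomial (Fin n) ℝ),
    (∀ k, D k ⊆ X ∧
      (∀ g ∈ D k, ∃ ε > 0, ∀ g' ∈ X, l2Norm (g' - g) < ε → g' ∈ D k) ∧
      (∀ g ∈ X, ∀ ε > 0, ∃ g' ∈ D k, l2Norm (g' - g) < ε)) ∧
    X ∩ (⋂ k, D k) ⊆ S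

/-! If `Sol(K∞, f_d)` were unbounded it would contain some `v ≠ 0`, and `f_d(v) ≤ f_d(0) = 0`
because `0 ∈ K∞`. The perturbation `g = f - ε ⟪v, ·⟫^d` is `O(ε)`-close to `f` in `P_d` and has
leading form `g_d(v) = f_d(v) - ε ‖v‖^(2d) < 0`. Along the ray `x + s v`, which stays in `K`
since `K + K∞ ⊆ K`, `g` grows like `s^d g_d(v) → -∞`, so `φ(g) = -∞` for arbitrarily small
perturbations of `f`, contradicting that `φ` is finite near `f`. -/

namespace MvPolynomial

variable {σ R : Type*} [CommSemiring R]

theorem IsHomogeneous.eval_smul {p : MvPolynomial σ R} {k : ℕ} (hp : p.IsHomogeneous k)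
    (c : R) (x : σ → R) : eval (c • x) p = c ^ k * eval x p := by
  rw [eval_eq, eval_eq, Finset.mul_sum]
  refine Finset.sum_congr rfl fun m hm => ?_
  simp only [Pi.smul_apply, smul_eq_mul, mul_pow, Finset.prod_mul_distrib,
    Finset.prod_pow_eq_pow_sum, ← hp.degree_eq_sum_deg_support hm]
  ring

theorem sum_homogeneousComponent_of_totalDegree_le {p : MvPolynomial σ R} {d : ℕ}
    (hp : p.totalDegree ≤ d) :
    ∑ k ∈ Finset.range (d + 1), homogeneousComponent k p = p := by
  rw [← Finset.sum_subset (Finset.range_subset_range.mpr (by omega : p.totalDegree + 1 ≤ d + 1)),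
    sum_homogeneousComponent]
  intro k _ hk
  exact homogeneousComponent_eq_zero k p (by simpa using hk)

end MvPolynomial

theorem evalP_smul_of_isHomogeneous {n k : ℕ} {p : MvPolynomial (Fin n) ℝ}
    (hp : p.IsHomogeneous k) (c : ℝ) (x : En n) : evalP p (c • x) = c ^ k * evalP p x :=
  hp.eval_smul c (fun i => x i)

theorem continuous_evalP {n : ℕ} (p : MvPolynomial (Fin n) ℝ) : Continuous (evalP p) :=
  p.continuous_eval.comp (continuous_pi fun i => (EuclideanSpace.proj i).continuous)

theorem l2Norm_nonneg {n : ℕ} (p : MvPolynomial (Fin n) ℝ) : 0 ≤ l2Norm p :=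
  Real.sqrt_nonneg _

theorem l2Norm_smul {n : ℕ} (c : ℝ) (p : MvPolynomial (Fin n) ℝ) :
    l2Norm (c • p) = |c| * l2Norm p := by
  rcases eq_or_ne c 0 with rfl | hc
  · simp [l2Norm]
  rw [l2Norm, l2Norm, support_smul_eq hc, ← Real.sqrt_sq_eq_abs, ← Real.sqrt_mul (sq_nonneg c),
    Finset.mul_sum]
  simp only [coeff_smul, smul_eq_mul, mul_pow]

def innerPoly {n : ℕ} (v : En n) : MvPolynomial (Fin n) ℝ :=
  ∑ i, C (v i) * X i

theorem evalP_innerPoly {n : ℕ} (v x : En n) : evalP (innerPoly v) x = ⟪v, x⟫ := by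
  simp [evalP, innerPoly, PiLp.inner_apply, mul_comm]

theorem isHomogeneous_innerPoly {n : ℕ} (v : En n) : (innerPoly v).IsHomogeneous 1 :=
  IsHomogeneous.sum _ _ _ fun i _ => isHomogeneous_C_mul_X (v i) i

theorem evalP_eq_sum_homogeneousComponent {n d : ℕ} {p : MvPolynomial (Fin n) ℝ}
    (hp : p.totalDegree ≤ d) (x : En n) :
    evalP p x = ∑ k ∈ Finset.range (d + 1), evalP (homogeneousComponent k p) x := by
  conv_lhs => rw [← sum_homogeneousComponent_of_totalDegree_le hp]
  simp only [evalP, map_sum]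

theorem tendsto_evalP_add_smul_div_pow {n d : ℕ} {p : MvPolynomial (Fin n) ℝ}
    (hp : p.totalDegree ≤ d) (x v : En n) :
    Tendsto (fun s : ℝ => evalP p (x + s • v) / s ^ d) atTop
      (𝓝 (evalP (homogeneousComponent d p) v)) := by
  set F : ℝ → ℝ := fun t => ∑ k ∈ Finset.range (d + 1),
    t ^ (d - k) * evalP (homogeneousComponent k p) (v + t • x)
  have hF : Continuous F := continuous_finsetSum _ fun k _ =>
    (continuous_pow _).mul ((continuous_evalP _).comp (continuous_const.add
      (continuous_id.smul continuous_const)))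
  have hF0 : F 0 = evalP (homogeneousComponent d p) v := by
    simp only [F]
    rw [Finset.sum_range_succ, Finset.sum_eq_zero fun k hk => by
      rw [zero_pow (by simp at hk; omega), zero_mul]]
    simp
  have hFs : ∀ s : ℝ, 0 < s → F s⁻¹ = evalP p (x + s • v) / s ^ d := by
    intro s hs
    have hxv : x + s • v = s • (v + s⁻¹ • x) := by
      rw [smul_add, smul_smul, mul_inv_cancel₀ hs.ne', one_smul, add_comm]
    rw [hxv, evalP_eq_sum_homogeneousComponent hp, Finset.sum_div]
    refine Finset.sum_congr rfl fun k hk => ?_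
    rw [evalP_smul_of_isHomogeneous (homogeneousComponent_isHomogeneous k p), inv_pow,
      pow_sub₀ s hs.ne' (by simp at hk; omega)]
    field_simp
  rw [← hF0]
  refine ((hF.tendsto 0).comp tendsto_inv_atTop_zero).congr' ?_
  filter_upwards [eventually_gt_atTop 0] with s hs using hFs s hs

theorem tendsto_evalP_add_smul_atBot {n d : ℕ} {p : MvPolynomial (Fin n) ℝ}
    (hp : p.totalDegree ≤ d) (hd : d ≠ 0) (x : En n) {v : En n}
    (hv : evalP (homogeneousComponent d p) v < 0) :
    Tendsto (fun s : ℝ => evalP p (x + s • v)) atTop atBot := by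
  refine ((tendsto_pow_atTop hd).atTop_mul_neg hv
    (tendsto_evalP_add_smul_div_pow hp x v)).congr' ?_
  filter_upwards [eventually_gt_atTop 0] with s hs
  exact mul_div_cancel₀ _ (pow_ne_zero d hs.ne')

theorem zero_mem_asympCone {n : ℕ} {K : Set (En n)} (hK : K.Nonempty) :
    (0 : En n) ∈ asympCone K := by
  obtain ⟨x, hx⟩ := hK
  refine ⟨fun k : ℕ => (k : ℝ), fun _ => x, fun _ => hx, tendsto_natCast_atTop_atTop, ?_⟩
  simpa using (tendsto_inv_atTop_zero.comp (tendsto_natCast_atTop_atTop (R := ℝ))).smul_const x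

theorem add_smul_mem_of_mem_asympCone {n : ℕ} {K : Set (En n)} (hKcl : IsClosed K)
    (hKcv : Convex ℝ K) {x v : En n} (hx : x ∈ K) (hv : v ∈ asympCone K) {s : ℝ}
    (hs : 0 ≤ s) : x + s • v ∈ K := by
  obtain ⟨t, y, hyK, ht, hyv⟩ := hv
  have hst : Tendsto (fun k => s * (t k)⁻¹) atTop (𝓝 0) := by
    simpa using ht.inv_tendsto_atTop.const_mul s
  have hlim : Tendsto (fun k => (1 - s * (t k)⁻¹) • x + (s * (t k)⁻¹) • y k) atTop
      (𝓝 (x + s • v)) := by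
    refine Tendsto.add (by simpa using (hst.const_sub 1).smul_const x) ?_
    simpa only [smul_smul] using hyv.const_smul s
  refine hKcl.mem_of_tendsto hlim ?_
  filter_upwards [ht.eventually_ge_atTop s, ht.eventually_gt_atTop 0] with k hsk htk
  have hle : s * (t k)⁻¹ ≤ 1 := by rwa [← div_eq_mul_inv, div_le_one htk]
  exact hKcv hx (hyK k) (by linarith) (by positivity) (by ring)

theorem not_bddBelow_evalP_image {n d : ℕ} {K : Set (En n)} (hKcl : IsClosed K)
    (hKcv : Convex ℝ K) {x v : En n} (hx : x ∈ K) (hv : v ∈ asympCone K)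
    {p : MvPolynomial (Fin n) ℝ} (hp : p.totalDegree ≤ d) (hd : d ≠ 0)
    (hpv : evalP (homogeneousComponent d p) v < 0) : ¬BddBelow (evalP p '' K) := by
  rintro ⟨b, hb⟩
  obtain ⟨s, hs, hsb⟩ := ((eventually_ge_atTop 0).and
    ((tendsto_evalP_add_smul_atBot hp hd x hpv).eventually_lt_atBot b)).exists
  exact hsb.not_ge (hb ⟨_, add_smul_mem_of_mem_asympCone hKcl hKcv hx hv hs, rfl⟩)

theorem stmt15_general {n d : ℕ} (hd : 1 ≤ d) (K : Set (En n)) (hKne : K.Nonempty) (hKcl : IsClosed K)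
    (hKcv : Convex ℝ K) (f : MvPolynomial (Fin n) ℝ) (hdeg : f.totalDegree = d)
    (hlip : ∃ ε > (0 : ℝ), ∃ L > (0 : ℝ),
      ∀ g : MvPolynomial (Fin n) ℝ, g.totalDegree ≤ d → l2Norm (g - f) < ε →
        BddBelow (evalP g '' K) ∧
        |sInf (evalP g '' K) - sInf (evalP f '' K)| ≤ L * l2Norm (g - f)) :
    IsBounded (solSet (asympCone K) (evalP (homogeneousComponent d f))) := by
  obtain ⟨ε₀, hε₀, L, -, hlip⟩ := hlip
  by_contra hunb
  obtain ⟨v, ⟨hvK, hvmin⟩, hv⟩ :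
      ∃ v ∈ solSet (asympCone K) (evalP (homogeneousComponent d f)), v ≠ 0 := by
    by_contra! h
    exact hunb (isBounded_singleton.subset h)
  have hfv : evalP (homogeneousComponent d f) v ≤ 0 := by
    have h0 := evalP_smul_of_isHomogeneous (homogeneousComponent_isHomogeneous d f) 0 0
    rw [zero_smul, zero_pow (by omega), zero_mul] at h0
    exact h0 ▸ hvmin 0 (zero_mem_asympCone hKne)
  set q := innerPoly v ^ d
  have hq : q.IsHomogeneous d := by simpa using (isHomogeneous_innerPoly v).pow d
  have hqv : 0 < evalP q v := by
    have heval : evalP q v = ⟪v, v⟫ ^ d := by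
      simp only [q, evalP, map_pow]
      exact congrArg (· ^ d) (evalP_innerPoly v v)
    rw [heval, real_inner_self_eq_norm_sq]
    positivity
  obtain ⟨ε, hε, hεq⟩ := exists_pos_mul_lt hε₀ (l2Norm q)
  have hgdeg : (f - ε • q).totalDegree ≤ d :=
    (totalDegree_sub _ _).trans
      (max_le hdeg.le ((totalDegree_smul_le ε q).trans hq.totalDegree_le))
  have hgf : l2Norm (f - ε • q - f) < ε₀ := by
    rwa [sub_sub_cancel_left, ← neg_smul, l2Norm_smul, abs_neg, abs_of_pos hε, mul_comm]
  obtain ⟨x, hx⟩ := hKne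
  refine not_bddBelow_evalP_image hKcl hKcv hx hvK hgdeg (by omega) ?_ (hlip _ hgdeg hgf).1
  simp only [map_sub, map_smul, homogeneousComponent_eq_self hq]
  simp only [evalP, map_sub, smul_eval] at hfv hqv ⊢
  nlinarith

/-- If `K` is nonempty closed convex, `f` has degree `d ≥ 1`, `Sol(K,f) ≠ ∅`, and the optimal
value function `φ(g) = inf_K g` is finite-valued and locally Lipschitz continuous at `f`, then
`OP(K,f)` is regular, i.e. `Sol(K∞, f_d)` is bounded. -/
theorem stmt15 {n d : ℕ} (hd : 1 ≤ d) (K : Set (En n)) (hKne : K.Nonempty) (hKcl : IsClosed K)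
    (hKcv : Convex ℝ K) (f : MvPolynomial (Fin n) ℝ) (hdeg : f.totalDegree = d)
    (hSolne : (solSet K (evalP f)).Nonempty)
    (hlip : ∃ ε > (0 : ℝ), ∃ L > (0 : ℝ),
      ∀ g : MvPolynomial (Fin n) ℝ, g.totalDegree ≤ d → l2Norm (g - f) < ε →
        BddBelow (evalP g '' K) ∧
        |sInf (evalP g '' K) - sInf (evalP f '' K)| ≤ L * l2Norm (g - f)) :
    IsBounded (solSet (asympCone K) (evalP (homogeneousComponent d f))) :=
  stmt15_general hd K hKne hKcl hKcv f hdeg hlip
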